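/- arXiv:1701.01092 — 5 statements merged into one kernel-verified Lean document; each statement's English description precedes it below -/
import Mathlib

section
/- Given a finite graph G=(V,E) and weights J: E→ℝ_{>0}, sample ω∈{0,1}^E according to the FK-Ising measure with weights (1−e^{−2J_e})_{e∈E}, and then, conditionally on ω, sample σ∈{−1,+1}^V by assigning to each connected component of the subgraph (V,{e: ω_e=1}) an independent uniform spin in {−1,+1} (σ being constant on each component). Then the marginal law of σ is the Ising measure P^Isg_J. Equivalently: the probability measure μ₁ on {−1,+1}^V×{0,1}^E defined by μ₁(σ,ω)=P^FK_J(ω)·2^{−k(ω)}·1{σ is constant on every connected component of (V,{e: ω_e=1})} has first marginal equal to P^Isg_J. -/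
open scoped Classical
noncomputable section

/-- The simple graph on `V` whose edges are the edges `e` of the multigraph
(with endpoint map `ends`) satisfying `p e`. -/
def og {V E : Type} (ends : E → V × V) (p : E → Prop) : SimpleGraph V :=
  SimpleGraph.fromRel (fun v w => ∃ e, p e ∧ (ends e).1 = v ∧ (ends e).2 = w)

/-- Number of connected components (isolated vertices counted) of the subgraph
with edge set `{e | p e}`. -/
def numC {V E : Type} (ends : E → V × V) (p : E → Prop) : ℕ :=
  Nat.card (og ends p).ConnectedComponent

/-- Spin value `+1` or `-1` encoded by a boolean. -/
def spin (b : Bool) : ℝ := if b then 1 else -1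

variable {V E : Type} [Fintype V] [Fintype E]

/-- Unnormalized Ising weight `exp (∑ J_e σ_{e+} σ_{e-})`. -/
def isingW (ends : E → V × V) (J : E → ℝ) (σ : V → Bool) : ℝ :=
  Real.exp (∑ e, J e * spin (σ (ends e).1) * spin (σ (ends e).2))

/-- Ising partition function. -/
def ZIsg (ends : E → V × V) (J : E → ℝ) : ℝ :=
  ∑ σ : V → Bool, isingW ends J σ

/-- Unnormalized FK-Ising weight with weights `1 - e^{-2 J_e}`. -/
def fkW (ends : E → V × V) (J : E → ℝ) (ω : E → Bool) : ℝ :=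
  2 ^ numC ends (fun e => ω e = true) *
    ∏ e, (if ω e then 1 - Real.exp (-2 * J e) else Real.exp (-2 * J e))

/-- FK-Ising partition function. -/
def ZFK (ends : E → V × V) (J : E → ℝ) : ℝ :=
  ∑ ω : E → Bool, fkW ends J ω

/-- `σ` is constant on each connected component of the subgraph of open edges `ω`. -/
def constOnComp (ends : E → V × V) (ω : E → Bool) (σ : V → Bool) : Prop :=
  ∀ v w : V, (og ends (fun e => ω e = true)).Reachable v w → σ v = σ w

/-- The coupling `μ₁`: sample `ω` by FK-Ising, then uniform independent spins on clusters. -/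
def μ₁ (ends : E → V × V) (J : E → ℝ) (σ : V → Bool) (ω : E → Bool) : ℝ :=
  (fkW ends J ω / ZFK ends J) * ((2 : ℝ) ^ numC ends (fun e => ω e = true))⁻¹ *
    (if constOnComp ends ω σ then 1 else 0)

set_option linter.unusedSectionVars false

/-- Auxiliary: constOnComp iff agreement along each open edge. -/
lemma constOnComp_iff (ends : E → V × V)
    (hloop : ∀ e, (ends e).1 ≠ (ends e).2) (ω : E → Bool) (σ : V → Bool) :
    constOnComp ends ω σ ↔ ∀ e, ω e = true → σ (ends e).1 = σ (ends e).2 := by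
  constructor
  · intro h e he
    apply h
    apply SimpleGraph.Adj.reachable
    rw [og, SimpleGraph.fromRel_adj]
    exact ⟨hloop e, Or.inl ⟨e, he, rfl, rfl⟩⟩
  · intro h v w hr
    obtain ⟨p⟩ := hr
    induction p with
    | nil => rfl
    | cons a p ih =>
      rename_i u x y
      rw [og, SimpleGraph.fromRel_adj] at a
      obtain ⟨-, hor⟩ := a
      rcases hor with ⟨e, he, h1, h2⟩ | ⟨e, he, h1, h2⟩
      · have key := h e he; rw [h1, h2] at key; exact key.trans ih
      · have key := (h e he).symm; rw [h2, h1] at key; exact key.trans ih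

/-- Auxiliary: the number of component-constant spin configurations is `2^numC`. -/
lemma sum_ind_const (ends : E → V × V) (ω : E → Bool) :
    ∑ σ : V → Bool, (if constOnComp ends ω σ then (1:ℝ) else 0)
      = 2 ^ numC ends (fun e => ω e = true) := by
  set G := og ends (fun e => ω e = true) with hG
  have : Finite G.ConnectedComponent := Quot.finite _
  have eqv : {σ : V → Bool // constOnComp ends ω σ} ≃ (G.ConnectedComponent → Bool) :=
    { toFun := fun σ => SimpleGraph.ConnectedComponent.lift σ.1
        (fun v w p _ => σ.2 v w ⟨p⟩)
      invFun := fun f => ⟨fun v => f (G.connectedComponentMk v),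
        fun v w hr => by
          show f (G.connectedComponentMk v) = f (G.connectedComponentMk w)
          rw [SimpleGraph.ConnectedComponent.sound hr]⟩
      left_inv := fun σ => by ext v; rfl
      right_inv := fun f => by
        funext c
        refine SimpleGraph.ConnectedComponent.ind (fun v => ?_) c
        rfl }
  rw [Finset.sum_boole]
  have hcard : (Finset.univ.filter (fun σ : V → Bool => constOnComp ends ω σ)).card
      = 2 ^ numC ends (fun e => ω e = true) := by
    rw [← Fintype.card_subtype, ← Nat.card_eq_fintype_card, Nat.card_congr eqv,
      Nat.card_fun, numC]
    simp [Nat.card_eq_fintype_card]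
    exact Fintype.card_congr (Equiv.refl _)
  rw [hcard]
  push_cast
  ring

set_option linter.unusedSectionVars false

/-- Auxiliary: factorized Ising weight. -/
lemma isingW_factor (ends : E → V × V) (J : E → ℝ) (σ : V → Bool) :
    Real.exp (-∑ e, J e) * isingW ends J σ
      = ∏ e, (if σ (ends e).1 = σ (ends e).2 then (1:ℝ) else Real.exp (-2 * J e)) := by
  rw [isingW, ← Real.exp_add]
  have : ∀ e : E, (if σ (ends e).1 = σ (ends e).2 then (1:ℝ) else Real.exp (-2 * J e))
      = Real.exp (if σ (ends e).1 = σ (ends e).2 then 0 else -2 * J e) := by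
    intro e; split <;> simp
  rw [Finset.prod_congr rfl (fun e _ => this e), ← Real.exp_sum]
  congr 1
  rw [neg_add_eq_sub, ← Finset.sum_sub_distrib]
  refine Finset.sum_congr rfl (fun e _ => ?_)
  cases h1 : σ (ends e).1 <;> cases h2 : σ (ends e).2 <;> simp [spin, h1, h2] <;> ring

/-- Auxiliary: the Edwards–Sokal expansion for a fixed spin configuration. -/
lemma key_sum (ends : E → V × V) (hloop : ∀ e, (ends e).1 ≠ (ends e).2)
    (J : E → ℝ) (σ : V → Bool) :
    ∑ ω : E → Bool,
        (∏ e, (if ω e then 1 - Real.exp (-2 * J e) else Real.exp (-2 * J e)))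
          * (if constOnComp ends ω σ then (1:ℝ) else 0)
      = Real.exp (-∑ e, J e) * isingW ends J σ := by
  rw [isingW_factor]
  set g : E → Bool → ℝ := fun e b =>
    if b then (1 - Real.exp (-2 * J e)) * (if σ (ends e).1 = σ (ends e).2 then 1 else 0)
    else Real.exp (-2 * J e) with hg
  have hsum : ∀ e : E, (if σ (ends e).1 = σ (ends e).2 then (1:ℝ) else Real.exp (-2 * J e))
      = ∑ b : Bool, g e b := by
    intro e
    simp [hg]
    split <;> ring
  rw [Finset.prod_congr rfl (fun e _ => hsum e), Fintype.prod_sum]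
  refine Finset.sum_congr rfl (fun ω _ => ?_)
  by_cases hc : constOnComp ends ω σ
  · rw [if_pos hc, mul_one]
    refine Finset.prod_congr rfl (fun e _ => ?_)
    rw [constOnComp_iff ends hloop] at hc
    cases he : ω e
    · simp [hg]
    · simp [hg, hc e he]
  · rw [if_neg hc, mul_zero]
    rw [constOnComp_iff ends hloop] at hc
    push_neg at hc
    obtain ⟨e, he, hne⟩ := hc
    symm
    refine Finset.prod_eq_zero (Finset.mem_univ e) ?_
    simp [hg, he, hne]

/-- Auxiliary: relation between the two partition functions. -/
lemma ZFK_eq (ends : E → V × V) (hloop : ∀ e, (ends e).1 ≠ (ends e).2) (J : E → ℝ) :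
    ZFK ends J = Real.exp (-∑ e, J e) * ZIsg ends J := by
  rw [ZFK, ZIsg, Finset.mul_sum]
  have : ∀ ω : E → Bool, fkW ends J ω =
      ∑ σ : V → Bool,
        (∏ e, (if ω e then 1 - Real.exp (-2 * J e) else Real.exp (-2 * J e)))
          * (if constOnComp ends ω σ then (1:ℝ) else 0) := by
    intro ω
    rw [← Finset.mul_sum, sum_ind_const, fkW, mul_comm]
  rw [Finset.sum_congr rfl (fun ω _ => this ω), Finset.sum_comm]
  exact Finset.sum_congr rfl (fun σ _ => key_sum ends hloop J σ)

/-- the first marginal of `μ₁` is the Ising measure. -/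
theorem stmt0 [Nonempty V] (ends : E → V × V)
    (hloop : ∀ e, (ends e).1 ≠ (ends e).2)
    (J : E → ℝ) (hJ : ∀ e, 0 < J e) (σ : V → Bool) :
    ∑ ω : E → Bool, μ₁ ends J σ ω = isingW ends J σ / ZIsg ends J := by
  have hE : Real.exp (-∑ e, J e) ≠ 0 := Real.exp_ne_zero _
  have hμ : ∀ ω : E → Bool, μ₁ ends J σ ω =
      ((∏ e, (if ω e then 1 - Real.exp (-2 * J e) else Real.exp (-2 * J e)))
        * (if constOnComp ends ω σ then (1:ℝ) else 0)) / ZFK ends J := by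
    intro ω
    have h2 : ((2:ℝ) ^ numC ends (fun e => ω e = true)) ≠ 0 := by positivity
    rw [μ₁, fkW, div_mul_eq_mul_div, div_mul_eq_mul_div]
    congr 1
    field_simp
  rw [Finset.sum_congr rfl (fun ω _ => hμ ω), ← Finset.sum_div,
    key_sum ends hloop J σ, ZFK_eq ends hloop J, mul_div_mul_left _ _ hE]
end
end

section
/- Given a finite graph G=(V,E) and weights J: E→ℝ_{>0}, sample σ∈{−1,+1}^V according to the Ising measure P^Isg_J, and then, conditionally on σ, sample ω∈{0,1}^E by declaring independently each edge e with σ_{e₊}σ_{e₋}=−1 closed (ω_e=0) with probability 1, and each edge e with σ_{e₊}σ_{e₋}=+1 open (ω_e=1) with probability 1−e^{−2J_e} and closed with probability e^{−2J_e}. Then the marginal law of ω is the FK-Ising measure with weights (1−e^{−2J_e})_{e∈E}. Equivalently: the probability measure μ₂ on {−1,+1}^V×{0,1}^E defined by μ₂(σ,ω)=P^Isg_J(σ)·∏_{e∈E}[1{σ_{e₊}σ_{e₋}=−1}1{ω_e=0}+1{σ_{e₊}σ_{e₋}=+1}(1−e^{−2J_e})^{ω_e}(e^{−2J_e})^{1−ω_e}]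 has second marginal equal to P^FK_J. -/
open scoped Classical
noncomputable section

variable {V E : Type} [Fintype V] [Fintype E]

/-- The coupling `μ₂`: sample `σ` by Ising, then open each agreeing edge
independently with probability `1 - e^{-2 J_e}`. -/
def μ₂ (ends : E → V × V) (J : E → ℝ) (σ : V → Bool) (ω : E → Bool) : ℝ :=
  (isingW ends J σ / ZIsg ends J) *
    ∏ e, (if σ (ends e).1 = σ (ends e).2 then
            (if ω e then 1 - Real.exp (-2 * J e) else Real.exp (-2 * J e))
          else (if ω e then 0 else 1))

-- auxiliary lemmas

/-- agree on all open edges -/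
def compat (ends : E → V × V) (ω : E → Bool) (σ : V → Bool) : Prop :=
  ∀ e, ω e = true → σ (ends e).1 = σ (ends e).2

lemma adj_const {σ : V → Bool} {G : SimpleGraph V}
    (h : ∀ v w, G.Adj v w → σ v = σ w) {v w : V} (hr : G.Reachable v w) :
    σ v = σ w := by
  obtain ⟨p⟩ := hr
  induction p with
  | nil => rfl
  | cons ha _ ih => exact (h _ _ ha).trans ih

lemma compat_iff (ends : E → V × V) (hloop : ∀ e, (ends e).1 ≠ (ends e).2)
    (ω : E → Bool) (σ : V → Bool) :
    compat ends ω σ ↔ constOnComp ends ω σ := by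
  constructor
  · intro h v w hr
    refine adj_const (fun a b hab => ?_) hr
    rcases hab with ⟨hne, ⟨e, he, h1, h2⟩ | ⟨e, he, h1, h2⟩⟩
    · rw [← h1, ← h2]; exact h e he
    · rw [← h1, ← h2]; exact (h e he).symm
  · intro h e he
    refine h _ _ (SimpleGraph.Adj.reachable ?_)
    exact ⟨hloop e, Or.inl ⟨e, he, rfl, rfl⟩⟩

lemma count_compat (ends : E → V × V) (hloop : ∀ e, (ends e).1 ≠ (ends e).2)
    (ω : E → Bool) :
    ∑ σ : V → Bool, (if constOnComp ends ω σ then (1:ℝ) else 0)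
      = 2 ^ numC ends (fun e => ω e = true) := by
  classical
  set G := og ends (fun e => ω e = true)
  have : (∑ σ : V → Bool, (if constOnComp ends ω σ then (1:ℝ) else 0))
      = (Finset.univ.filter (fun σ : V → Bool => constOnComp ends ω σ)).card := by
    rw [Finset.sum_boole]
  rw [this]
  have hcard : (Finset.univ.filter (fun σ : V → Bool => constOnComp ends ω σ)).card
      = Nat.card {σ : V → Bool // constOnComp ends ω σ} := by
    rw [Nat.card_eq_fintype_card, Fintype.card_subtype]
  rw [hcard]
  have e : {σ : V → Bool // constOnComp ends ω σ} ≃ (G.ConnectedComponent → Bool) :=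
    { toFun := fun σ => Quot.lift σ.1 (fun v w h => σ.2 v w h)
      invFun := fun f => ⟨fun v => f (G.connectedComponentMk v),
        fun v w h => congrArg f (SimpleGraph.ConnectedComponent.sound h)⟩
      left_inv := fun σ => rfl
      right_inv := fun f => by
        funext c
        induction c using SimpleGraph.ConnectedComponent.ind
        rfl }
  rw [Nat.card_congr e, Nat.card_fun, Nat.card_eq_fintype_card (α := Bool)]
  norm_num [numC]
  exact Fintype.card_congr (Equiv.refl _)

lemma key (ends : E → V × V) (hloop : ∀ e, (ends e).1 ≠ (ends e).2)
    (J : E → ℝ) (σ : V → Bool) (ω : E → Bool) :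
    isingW ends J σ *
      ∏ e, (if σ (ends e).1 = σ (ends e).2 then
              (if ω e then 1 - Real.exp (-2 * J e) else Real.exp (-2 * J e))
            else (if ω e then 0 else 1))
    = (if constOnComp ends ω σ then (1:ℝ) else 0) *
        (Real.exp (∑ e, J e) *
          ∏ e, (if ω e then 1 - Real.exp (-2 * J e) else Real.exp (-2 * J e))) := by
  classical
  have hising : isingW ends J σ
      = ∏ e, Real.exp (J e * spin (σ (ends e).1) * spin (σ (ends e).2)) := by
    rw [isingW, Real.exp_sum]
  rw [hising, ← Finset.prod_mul_distrib]
  rw [← compat_iff ends hloop]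
  by_cases hc : compat ends ω σ
  · rw [if_pos hc, one_mul, Real.exp_sum, ← Finset.prod_mul_distrib]
    refine Finset.prod_congr rfl (fun e _ => ?_)
    by_cases hs : σ (ends e).1 = σ (ends e).2
    · rw [if_pos hs]
      have hsp : spin (σ (ends e).1) * spin (σ (ends e).2) = 1 := by
        rw [hs]; cases σ (ends e).2 <;> simp [spin]
      rw [mul_assoc, hsp, mul_one]
    · rw [if_neg hs]
      have hω : ω e = false := by
        cases h : ω e
        · rfl
        · exact absurd (hc e h) hs
      have hsp : spin (σ (ends e).1) * spin (σ (ends e).2) = -1 := by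
        cases h1 : σ (ends e).1 <;> cases h2 : σ (ends e).2 <;>
          simp_all [spin]
      rw [hω, mul_assoc, hsp]
      simp only [if_false, Bool.false_eq_true, mul_one, ← Real.exp_add]
      ring_nf
  · rw [if_neg hc, zero_mul]
    simp only [compat, not_forall] at hc
    obtain ⟨e, he, hs⟩ := hc
    refine Finset.prod_eq_zero (Finset.mem_univ e) ?_
    rw [if_neg hs, he, if_pos rfl, mul_zero]

lemma sum_key (ends : E → V × V) (hloop : ∀ e, (ends e).1 ≠ (ends e).2)
    (J : E → ℝ) (ω : E → Bool) :
    ∑ σ : V → Bool, (isingW ends J σ *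
      ∏ e, (if σ (ends e).1 = σ (ends e).2 then
              (if ω e then 1 - Real.exp (-2 * J e) else Real.exp (-2 * J e))
            else (if ω e then 0 else 1)))
    = Real.exp (∑ e, J e) * fkW ends J ω := by
  classical
  calc ∑ σ : V → Bool, (isingW ends J σ *
      ∏ e, (if σ (ends e).1 = σ (ends e).2 then
              (if ω e then 1 - Real.exp (-2 * J e) else Real.exp (-2 * J e))
            else (if ω e then 0 else 1)))
      = ∑ σ : V → Bool, (if constOnComp ends ω σ then (1:ℝ) else 0) *
          (Real.exp (∑ e, J e) *
            ∏ e, (if ω e then 1 - Real.exp (-2 * J e) else Real.exp (-2 * J e))) := by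
        exact Finset.sum_congr rfl (fun σ _ => key ends hloop J σ ω)
    _ = (∑ σ : V → Bool, (if constOnComp ends ω σ then (1:ℝ) else 0)) *
          (Real.exp (∑ e, J e) *
            ∏ e, (if ω e then 1 - Real.exp (-2 * J e) else Real.exp (-2 * J e))) := by
        rw [Finset.sum_mul]
    _ = Real.exp (∑ e, J e) * fkW ends J ω := by
        rw [count_compat ends hloop ω, fkW]; ring

lemma sum_factor_one (ends : E → V × V) (J : E → ℝ) (σ : V → Bool) :
    ∑ ω : E → Bool, ∏ e, (if σ (ends e).1 = σ (ends e).2 then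
              (if ω e then 1 - Real.exp (-2 * J e) else Real.exp (-2 * J e))
            else (if ω e then (0:ℝ) else 1)) = 1 := by
  classical
  rw [← Fintype.prod_sum (f := fun e (b : Bool) =>
    (if σ (ends e).1 = σ (ends e).2 then
        (if b then 1 - Real.exp (-2 * J e) else Real.exp (-2 * J e))
      else (if b then (0:ℝ) else 1)))]
  refine Finset.prod_eq_one (fun e _ => ?_)
  rw [Fintype.sum_bool]
  by_cases hs : σ (ends e).1 = σ (ends e).2 <;> simp [hs]

lemma Zrel (ends : E → V × V) (hloop : ∀ e, (ends e).1 ≠ (ends e).2)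
    (J : E → ℝ) : ZIsg ends J = Real.exp (∑ e, J e) * ZFK ends J := by
  classical
  calc ZIsg ends J = ∑ σ : V → Bool, isingW ends J σ *
      ∑ ω : E → Bool, ∏ e, (if σ (ends e).1 = σ (ends e).2 then
              (if ω e then 1 - Real.exp (-2 * J e) else Real.exp (-2 * J e))
            else (if ω e then (0:ℝ) else 1)) := by
        rw [ZIsg]
        exact Finset.sum_congr rfl (fun σ _ => by rw [sum_factor_one ends J σ, mul_one])
    _ = ∑ ω : E → Bool, ∑ σ : V → Bool, (isingW ends J σ *
          ∏ e, (if σ (ends e).1 = σ (ends e).2 then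
              (if ω e then 1 - Real.exp (-2 * J e) else Real.exp (-2 * J e))
            else (if ω e then (0:ℝ) else 1))) := by
        simp_rw [Finset.mul_sum]
        rw [Finset.sum_comm]
    _ = ∑ ω : E → Bool, Real.exp (∑ e, J e) * fkW ends J ω := by
        exact Finset.sum_congr rfl (fun ω _ => sum_key ends hloop J ω)
    _ = Real.exp (∑ e, J e) * ZFK ends J := by rw [← Finset.mul_sum, ZFK]

/-- the second marginal of `μ₂` is the FK-Ising measure. -/
theorem stmt1 [Nonempty V] (ends : E → V × V)
    (hloop : ∀ e, (ends e).1 ≠ (ends e).2)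
    (J : E → ℝ) (hJ : ∀ e, 0 < J e) (ω : E → Bool) :
    ∑ σ : V → Bool, μ₂ ends J σ ω = fkW ends J ω / ZFK ends J := by
  classical
  simp_rw [μ₂, div_mul_eq_mul_div]
  rw [← Finset.sum_div, sum_key ends hloop J ω, Zrel ends hloop J,
    mul_div_mul_left _ _ (Real.exp_ne_zero _)]
end
end

section
/- Let G=(V,E) be a finite graph and J: E→ℝ_{>0}. Then the random current partition function equals (up to the factor 2^{|V|}) the Ising partition function: Σ_{n∈ℕ^E satisfying the parity condition} ∏_{e∈E} J_e^{n_e}/n_e! = 2^{−|V|} Σ_{σ∈{−1,+1}^V} exp(Σ_{e∈E} J_e σ_{e₊}σ_{e₋}), where the sum on the left is a convergent series over all n∈ℕ^E such that for every x∈V the sum Σ_{e incident to x} n_e is even. -/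
open scoped Classical
noncomputable section

variable {V E : Type} [Fintype V] [Fintype E]

/-- The parity condition: at every vertex, the total multiplicity of incident
edges is even. -/
def parityCond (ends : E → V × V) (n : E → ℕ) : Prop :=
  ∀ x : V,
    Even (∑ e ∈ Finset.univ.filter (fun e => (ends e).1 = x ∨ (ends e).2 = x), n e)

/-- Unnormalized random current weight `1{parity} ∏_e J_e^{n_e} / n_e!`. -/
def rcW (ends : E → V × V) (J : E → ℝ) (n : E → ℕ) : ℝ :=
  (if parityCond ends n then 1 else 0) * ∏ e, J e ^ n e / ((n e).factorial : ℝ)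


lemma pi_tsum_fin : ∀ (m : ℕ) (f : Fin m → ℕ → ℝ), (∀ i, Summable (f i)) →
    Summable (fun n : Fin m → ℕ => ∏ i, f i (n i)) ∧
    ∑' n : Fin m → ℕ, ∏ i, f i (n i) = ∏ i, ∑' k, f i k := by
  intro m
  induction m with
  | zero =>
    intro f _
    have h1 : HasSum (fun n : Fin 0 → ℕ => ∏ i, f i (n i)) 1 := by
      have := hasSum_single (f := fun n : Fin 0 → ℕ => ∏ i, f i (n i))
        (default : Fin 0 → ℕ) (by intro b hb; exact absurd (Subsingleton.elim b default) hb)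
      simpa using this
    exact ⟨h1.summable, by simp [h1.tsum_eq]⟩
  | succ m ih =>
    intro f hf
    obtain ⟨hs, ht⟩ := ih (fun i => f i.succ) (fun i => hf _)
    have h0 := hf 0
    have hmul : Summable (fun p : ℕ × (Fin m → ℕ) => f 0 p.1 * ∏ i, f i.succ (p.2 i)) := by
      apply summable_mul_of_summable_norm (f := f 0)
        (g := fun n : Fin m → ℕ => ∏ i, f i.succ (n i))
      · simpa only [Real.norm_eq_abs] using h0.abs
      · simpa only [Real.norm_eq_abs] using hs.abs
    have htmul : (∑' k, f 0 k) * (∑' n : Fin m → ℕ, ∏ i, f i.succ (n i))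
        = ∑' p : ℕ × (Fin m → ℕ), f 0 p.1 * ∏ i, f i.succ (p.2 i) := by
      apply Summable.tsum_mul_tsum h0 hs hmul
    set e : (Fin (m+1) → ℕ) ≃ ℕ × (Fin m → ℕ) := (Fin.consEquiv fun _ => ℕ).symm
    have hcomp : (fun p : ℕ × (Fin m → ℕ) => f 0 p.1 * ∏ i, f i.succ (p.2 i)) ∘ e
        = fun n : Fin (m+1) → ℕ => ∏ i, f i (n i) := by
      funext n
      rw [Function.comp_apply, Fin.prod_univ_succ]
      rfl
    have hsfull : Summable (fun n : Fin (m+1) → ℕ => ∏ i, f i (n i)) := by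
      rw [← hcomp]
      exact e.summable_iff.mpr hmul
    refine ⟨hsfull, ?_⟩
    have := e.tsum_eq (fun p : ℕ × (Fin m → ℕ) => f 0 p.1 * ∏ i, f i.succ (p.2 i))
    calc ∑' n : Fin (m+1) → ℕ, ∏ i, f i (n i)
        = ∑' n : Fin (m+1) → ℕ,
            ((fun p : ℕ × (Fin m → ℕ) => f 0 p.1 * ∏ i, f i.succ (p.2 i)) ∘ e) n := by
          rw [hcomp]
      _ = ∑' p : ℕ × (Fin m → ℕ), f 0 p.1 * ∏ i, f i.succ (p.2 i) := this
      _ = (∑' k, f 0 k) * (∑' n : Fin m → ℕ, ∏ i, f i.succ (n i)) := htmul.symm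
      _ = ∏ i, ∑' k, f i k := by rw [ht, Fin.prod_univ_succ]

lemma pi_tsum {E : Type} [Fintype E] (f : E → ℕ → ℝ) (hf : ∀ i, Summable (f i)) :
    Summable (fun n : E → ℕ => ∏ i, f i (n i)) ∧
    ∑' n : E → ℕ, ∏ i, f i (n i) = ∏ i, ∑' k, f i k := by
  set e := Fintype.equivFin E
  obtain ⟨hs, ht⟩ := pi_tsum_fin _ (fun j => f (e.symm j)) (fun j => hf _)
  set E2 : (E → ℕ) ≃ (Fin (Fintype.card E) → ℕ) := Equiv.arrowCongr e (Equiv.refl ℕ)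
  have hcomp : (fun nn : Fin (Fintype.card E) → ℕ => ∏ j, f (e.symm j) (nn j)) ∘ E2
      = fun n : E → ℕ => ∏ i, f i (n i) := by
    funext n
    simp only [Function.comp, E2, Equiv.arrowCongr_apply, Equiv.coe_refl, Function.comp,
      id_eq]
    exact Equiv.prod_comp e.symm (fun i => f i (n i))
  constructor
  · rw [← hcomp]; exact E2.summable_iff.mpr hs
  · calc ∑' n : E → ℕ, ∏ i, f i (n i)
        = ∑' n : E → ℕ,
          ((fun nn : Fin (Fintype.card E) → ℕ => ∏ j, f (e.symm j) (nn j)) ∘ E2) n := by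
          rw [hcomp]
      _ = ∑' nn : Fin (Fintype.card E) → ℕ, ∏ j, f (e.symm j) (nn j) :=
          E2.tsum_eq (fun nn => ∏ j, f (e.symm j) (nn j))
      _ = ∏ j, ∑' k, f (e.symm j) k := ht
      _ = ∏ i, ∑' k, f i k := Equiv.prod_comp e.symm (fun i => ∑' k, f i k)

lemma spin_sq (b : Bool) : spin b * spin b = 1 := by cases b <;> simp [spin]

lemma prod_spin_deg (ends : E → V × V) (hloop : ∀ e, (ends e).1 ≠ (ends e).2)
    (n : E → ℕ) (σ : V → Bool) :
    ∏ e, (spin (σ (ends e).1) * spin (σ (ends e).2)) ^ n e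
      = ∏ x : V, spin (σ x) ^
          (∑ e ∈ Finset.univ.filter (fun e => (ends e).1 = x ∨ (ends e).2 = x), n e) := by
  have key : ∀ x : V,
      spin (σ x) ^ (∑ e ∈ Finset.univ.filter
          (fun e => (ends e).1 = x ∨ (ends e).2 = x), n e)
      = ∏ e, spin (σ x) ^ (if (ends e).1 = x ∨ (ends e).2 = x then n e else 0) := by
    intro x
    rw [← Finset.prod_pow_eq_pow_sum, Finset.prod_filter]
    exact Finset.prod_congr rfl (fun e _ => by split <;> simp)
  calc ∏ e, (spin (σ (ends e).1) * spin (σ (ends e).2)) ^ n e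
      = ∏ e, ∏ x : V, spin (σ x) ^ (if (ends e).1 = x ∨ (ends e).2 = x then n e else 0) := by
        apply Finset.prod_congr rfl
        intro e _
        have hsplit : ∀ x : V,
            spin (σ x) ^ (if (ends e).1 = x ∨ (ends e).2 = x then n e else 0)
            = (if (ends e).1 = x then spin (σ x) ^ n e else 1)
              * (if (ends e).2 = x then spin (σ x) ^ n e else 1) := by
          intro x
          by_cases h1 : (ends e).1 = x <;> by_cases h2 : (ends e).2 = x
          · exact absurd (h1.trans h2.symm) (hloop e)
          · simp [h1, h2]
          · simp [h1, h2]
          · simp [h1, h2]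
        rw [Finset.prod_congr rfl (fun x _ => hsplit x), Finset.prod_mul_distrib,
          Finset.prod_ite_eq, Finset.prod_ite_eq]
        simp [mul_pow]
      _ = ∏ x : V, ∏ e, spin (σ x) ^ (if (ends e).1 = x ∨ (ends e).2 = x then n e else 0) :=
        Finset.prod_comm
      _ = _ := by
        exact Finset.prod_congr rfl (fun x _ => (key x).symm)

lemma charSum (ends : E → V × V) (hloop : ∀ e, (ends e).1 ≠ (ends e).2) (n : E → ℕ) :
    (∑ σ : V → Bool, ∏ e, (spin (σ (ends e).1) * spin (σ (ends e).2)) ^ n e)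
      = if parityCond ends n then (2 : ℝ) ^ Fintype.card V else 0 := by
  have step1 : (∑ σ : V → Bool, ∏ e, (spin (σ (ends e).1) * spin (σ (ends e).2)) ^ n e)
      = ∑ σ : V → Bool, ∏ x : V, spin (σ x) ^
          (∑ e ∈ Finset.univ.filter (fun e => (ends e).1 = x ∨ (ends e).2 = x), n e) :=
    Finset.sum_congr rfl (fun σ _ => prod_spin_deg ends hloop n σ)
  set d : V → ℕ := fun x =>
    ∑ e ∈ Finset.univ.filter (fun e => (ends e).1 = x ∨ (ends e).2 = x), n e with hd
  have step2 : (∑ σ : V → Bool, ∏ x : V, spin (σ x) ^ d x)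
      = ∏ x : V, ∑ b : Bool, spin b ^ d x :=
    (Fintype.prod_sum (fun x b => spin b ^ d x)).symm
  have step3 : ∀ x : V, (∑ b : Bool, spin b ^ d x) = if Even (d x) then (2:ℝ) else 0 := by
    intro x
    rw [Fintype.sum_bool]
    by_cases h : Even (d x)
    · simp only [spin, Bool.false_eq_true, if_true, if_false, one_pow]
      rw [Even.neg_one_pow h]
      norm_num [h]
    · simp only [spin, Bool.false_eq_true, if_true, if_false, one_pow]
      rw [Odd.neg_one_pow (Nat.not_even_iff_odd.mp h)]
      norm_num [h]
  rw [step1, step2, Finset.prod_congr rfl (fun x _ => step3 x)]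
  by_cases hp : parityCond ends n
  · rw [if_pos hp]
    rw [Finset.prod_congr rfl (fun x _ => if_pos (hp x)), Finset.prod_const]
    simp
  · rw [if_neg hp]
    obtain ⟨x, hx⟩ : ∃ x : V, ¬ Even (d x) := by
      by_contra h
      push_neg at h
      exact hp (fun x => h x)
    exact Finset.prod_eq_zero (Finset.mem_univ x) (by rw [if_neg hx])

/-- Real exponential as a `tsum`. -/
lemma real_exp_tsum (x : ℝ) : Real.exp x = ∑' k : ℕ, x ^ k / (k.factorial : ℝ) := by
  rw [Real.exp_eq_exp_ℝ, NormedSpace.exp_eq_tsum_div]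

/-- the random current partition function equals `2^{-|V|}` times the
Ising partition function; the series over currents satisfying the parity
condition converges. -/
theorem stmt4 [Nonempty V] (ends : E → V × V)
    (hloop : ∀ e, (ends e).1 ≠ (ends e).2)
    (J : E → ℝ) (hJ : ∀ e, 0 < J e) :
    Summable (fun n : E → ℕ => rcW ends J n) ∧
    ∑' n : E → ℕ, rcW ends J n =
      (∑ σ : V → Bool,
        Real.exp (∑ e, J e * spin (σ (ends e).1) * spin (σ (ends e).2)))
      / 2 ^ Fintype.card V := by
  obtain ⟨hPs, hPt⟩ := pi_tsum (fun e k => J e ^ k / (k.factorial : ℝ))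
      (fun e => Real.summable_pow_div_factorial (J e))
  have hPnn : ∀ n : E → ℕ, 0 ≤ ∏ e, J e ^ n e / ((n e).factorial : ℝ) :=
    fun n => Finset.prod_nonneg fun e _ =>
      div_nonneg (pow_nonneg (hJ e).le _) (Nat.cast_nonneg _)
  have hrc : Summable (fun n : E → ℕ => rcW ends J n) := by
    refine Summable.of_nonneg_of_le ?_ ?_ hPs
    · intro n
      unfold rcW
      apply mul_nonneg _ (hPnn n)
      split <;> norm_num
    · intro n
      unfold rcW
      split
      · rw [one_mul]
      · rw [zero_mul]; exact hPnn n
  refine ⟨hrc, ?_⟩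
  -- per-σ summability and tsum value
  have hσ := fun σ : V → Bool =>
    pi_tsum (fun e k => (spin (σ (ends e).1) * spin (σ (ends e).2) * J e) ^ k
        / (k.factorial : ℝ))
      (fun e => Real.summable_pow_div_factorial _)
  -- pointwise identity
  have hpt : ∀ n : E → ℕ, rcW ends J n =
      (∑ σ : V → Bool, ∏ e, (spin (σ (ends e).1) * spin (σ (ends e).2) * J e) ^ n e
        / ((n e).factorial : ℝ)) / 2 ^ Fintype.card V := by
    intro n
    have hnum : (∑ σ : V → Bool, ∏ e, (spin (σ (ends e).1) * spin (σ (ends e).2) * J e) ^ n e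
        / ((n e).factorial : ℝ))
        = (if parityCond ends n then (2:ℝ) ^ Fintype.card V else 0)
          * ∏ e, J e ^ n e / ((n e).factorial : ℝ) := by
      rw [← charSum ends hloop n, Finset.sum_mul]
      apply Finset.sum_congr rfl
      intro σ _
      rw [← Finset.prod_mul_distrib]
      apply Finset.prod_congr rfl
      intro e _
      rw [mul_pow, mul_div_assoc]
    rw [hnum]
    have h2 : (2:ℝ) ^ Fintype.card V ≠ 0 := by positivity
    unfold rcW
    split
    · field_simp
    · simp
  calc ∑' n : E → ℕ, rcW ends J n
      = ∑' n : E → ℕ, (∑ σ : V → Bool,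
          ∏ e, (spin (σ (ends e).1) * spin (σ (ends e).2) * J e) ^ n e
            / ((n e).factorial : ℝ)) / 2 ^ Fintype.card V := tsum_congr hpt
    _ = (∑' n : E → ℕ, ∑ σ : V → Bool,
          ∏ e, (spin (σ (ends e).1) * spin (σ (ends e).2) * J e) ^ n e
            / ((n e).factorial : ℝ)) / 2 ^ Fintype.card V := tsum_div_const
    _ = (∑ σ : V → Bool, ∑' n : E → ℕ,
          ∏ e, (spin (σ (ends e).1) * spin (σ (ends e).2) * J e) ^ n e
            / ((n e).factorial : ℝ)) / 2 ^ Fintype.card V := by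
        rw [Summable.tsum_finsetSum (fun σ _ => (hσ σ).1)]
    _ = (∑ σ : V → Bool,
          Real.exp (∑ e, J e * spin (σ (ends e).1) * spin (σ (ends e).2)))
        / 2 ^ Fintype.card V := by
        congr 1
        apply Finset.sum_congr rfl
        intro σ _
        rw [(hσ σ).2, Real.exp_sum]
        apply Finset.prod_congr rfl
        intro e _
        rw [real_exp_tsum]
        apply tsum_congr
        intro k
        ring_nf
end
end

section
/- Let G=(V,E) be a finite connected graph with conductances W: E→ℝ_{>0}, let x₀∈V, let E(f,f)=Σ_{e∈E}W_e(f(e₊)−f(e₋))² be the Dirichlet form with zero killing measure, write W_x=Σ_{y: y∼x}W_{xy} and J_e(Φ)=W_e Φ_{e₊}Φ_{e₋}. Then for every measurable h: ℝ_{≥0}^V×ℕ^E→[0,∞] the following identity holds in [0,∞]: Σ_{σ∈{−1,+1}^V: σ_{x₀}=+1} Σ_{n∈ℕ^E: n_e=0 whenever σ_{e₊}σ_{e₋}=−1} ∫_{(0,∞)^{V∖{x₀}}} h(Φ,n) exp(−(1/2)E(σΦ,σΦ)) ∏_{e∈E: σ_{e₊}σ_{e₋}=+1} e^{−2J_e(Φ)}(2J_e(Φ))^{n_e}/n_e!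 dΦ = Σ_{n∈ℕ^E} ∫_{(0,∞)^{V∖{x₀}}} h(Φ,n) exp(−(1/2)Σ_{x∈V}W_xΦ_x² − Σ_{e∈E}J_e(Φ)) (∏_{e∈E}(2J_e(Φ))^{n_e}/n_e!) 2^{#C(n)−1} dΦ, where in both integrals Φ_{x₀}=0, dΦ denotes Lebesgue measure ∏_{x∈V∖{x₀}}dΦ_x, σΦ is the function x↦σ_xΦ_x, and #C(n) is the number of connected components of the subgraph (V,{e: n_e>0}) (isolated vertices counted as components). -/
open scoped Classical ENNReal
open MeasureTheory

noncomputable section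

variable {V E : Type} [Fintype V] [Fintype E]

/-- The Dirichlet form `E(f,f) = ∑_x κ_x f(x)² + ∑_e W_e (f(e₊) - f(e₋))²`. -/
def dirichletForm (ends : E → V × V) (W : E → ℝ) (κ : V → ℝ) (f : V → ℝ) : ℝ :=
  ∑ x, κ x * f x ^ 2 + ∑ e, W e * (f (ends e).1 - f (ends e).2) ^ 2

/-- Interaction constant `J_e(Φ) = W_e Φ_{e₊} Φ_{e₋}`. -/
def Jw (ends : E → V × V) (W : E → ℝ) (Φ : V → ℝ) (e : E) : ℝ :=
  W e * Φ (ends e).1 * Φ (ends e).2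

/-- The set of edges incident to the vertex `x`. -/
def inc (ends : E → V × V) (x : V) : Finset E :=
  Finset.univ.filter (fun e => (ends e).1 = x ∨ (ends e).2 = x)

/-- Total conductance at `x`: `W_x = ∑_{y ~ x} W_{xy}` (sum over edges incident to `x`). -/
def Wtot (ends : E → V × V) (W : E → ℝ) (x : V) : ℝ :=
  ∑ e ∈ inc ends x, W e

/-- Extension of a field on `V ∖ {x₀}` to `V`, with value `a` at `x₀`. -/
def extV {V : Type} (x₀ : V) (a : ℝ) (φ : {x : V // x ≠ x₀} → ℝ) : V → ℝ :=
  fun x => if h : x = x₀ then a else φ ⟨x, h⟩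

/-! ### Auxiliary lemmas -/

lemma const_of_adj' {β : Type*} {G : SimpleGraph V} {f : V → β}
    (h : ∀ v w, G.Adj v w → f v = f w) {v w} (r : G.Reachable v w) : f v = f w := by
  obtain ⟨p⟩ := r
  induction p with
  | nil => rfl
  | cons a _ ih => exact (h _ _ a).trans ih

lemma counting' (ends : E → V × V) (x₀ : V) (n : E → ℕ) :
    (Finset.univ.filter (fun σ : V → Bool => σ x₀ = true ∧
        ∀ e, σ (ends e).1 ≠ σ (ends e).2 → n e = 0)).card
      = 2 ^ (numC ends (fun e => 0 < n e) - 1) := by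
  classical
  set G := og ends (fun e => 0 < n e) with hG
  haveI : Finite G.ConnectedComponent := inferInstance
  haveI : Fintype G.ConnectedComponent := Fintype.ofFinite _
  set c₀ := G.connectedComponentMk x₀ with hc₀
  have hadj : ∀ (σ : V → Bool), (∀ e, σ (ends e).1 ≠ σ (ends e).2 → n e = 0) →
      ∀ v w, G.Adj v w → σ v = σ w := by
    intro σ hσ v w hvw
    rw [hG, og, SimpleGraph.fromRel_adj] at hvw
    rcases hvw.2 with ⟨e, he, h1, h2⟩ | ⟨e, he, h1, h2⟩
    · by_contra hc
      have := hσ e (by rw [h1, h2]; exact hc)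
      omega
    · by_contra hc
      have := hσ e (by rw [h1, h2]; exact fun hq => hc hq.symm)
      omega
  have key : ∀ (σ : V → Bool), (∀ e, σ (ends e).1 ≠ σ (ends e).2 → n e = 0) →
      ∀ v w, G.connectedComponentMk v = G.connectedComponentMk w → σ v = σ w := by
    intro σ hσ v w hvw
    exact const_of_adj' (hadj σ hσ) (SimpleGraph.ConnectedComponent.exact hvw)
  let Fw : {σ : V → Bool // σ x₀ = true ∧ ∀ e, σ (ends e).1 ≠ σ (ends e).2 → n e = 0}
      → ({c : G.ConnectedComponent // c ≠ c₀} → Bool) :=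
    fun σ c => σ.1 c.1.out
  let Bw : ({c : G.ConnectedComponent // c ≠ c₀} → Bool)
      → {σ : V → Bool // σ x₀ = true ∧ ∀ e, σ (ends e).1 ≠ σ (ends e).2 → n e = 0} := by
    intro g
    refine ⟨fun v => if h : G.connectedComponentMk v = c₀ then true
      else g ⟨G.connectedComponentMk v, h⟩, by simp [hc₀], ?_⟩
    intro e he
    by_contra hc
    have hne : (ends e).1 ≠ (ends e).2 := by
      intro hq; apply he; rw [hq]
    have hadj' : G.Adj (ends e).1 (ends e).2 := by
      rw [hG, og, SimpleGraph.fromRel_adj]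
      exact ⟨hne, Or.inl ⟨e, by omega, rfl, rfl⟩⟩
    have hmk : G.connectedComponentMk (ends e).1 = G.connectedComponentMk (ends e).2 :=
      SimpleGraph.ConnectedComponent.sound hadj'.reachable
    apply he
    simp only [hmk]
  have hFB : Function.LeftInverse Bw Fw := by
    intro σ
    ext v
    simp only [Bw, Fw]
    split
    · next hv => exact ((key σ.1 σ.2.2 v x₀ hv).trans σ.2.1).symm
    · next hv => exact key σ.1 σ.2.2 _ _ (G.connectedComponentMk v).out_eq
  have hBF : Function.RightInverse Bw Fw := by
    intro g
    funext c
    simp only [Bw, Fw]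
    have h1 : G.connectedComponentMk c.1.out = c.1 := c.1.out_eq
    rw [dif_neg (by rw [h1]; exact c.2)]
    congr 1
    exact Subtype.ext h1
  have hequiv : Fintype.card {σ : V → Bool // σ x₀ = true ∧
      ∀ e, σ (ends e).1 ≠ σ (ends e).2 → n e = 0}
      = Fintype.card ({c : G.ConnectedComponent // c ≠ c₀} → Bool) :=
    Fintype.card_congr ⟨Fw, Bw, hFB, hBF⟩
  rw [← Fintype.card_subtype, hequiv, Fintype.card_fun, Fintype.card_bool]
  congr 1
  have hcc : Fintype.card {c : G.ConnectedComponent // c ≠ c₀}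
      = Fintype.card G.ConnectedComponent - 1 := by
    rw [Fintype.card_subtype_compl, Fintype.card_subtype_eq]
  rw [hcc, numC, Nat.card_eq_fintype_card]

lemma sum_Wtot' (ends : E → V × V)
    (hloop : ∀ e, (ends e).1 ≠ (ends e).2) (W : E → ℝ) (Φ : V → ℝ) :
    ∑ x, Wtot ends W x * Φ x ^ 2
      = ∑ e, W e * (Φ (ends e).1 ^ 2 + Φ (ends e).2 ^ 2) := by
  classical
  have hx : ∀ x, Wtot ends W x * Φ x ^ 2 = ∑ e ∈ inc ends x, W e * Φ x ^ 2 := by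
    intro x; rw [Wtot, Finset.sum_mul]
  simp_rw [hx]
  rw [Finset.sum_comm' (s := Finset.univ) (t := fun x => inc ends x)
    (t' := Finset.univ) (s' := fun e => ({(ends e).1, (ends e).2} : Finset V))
    (by intro x e; simp [inc, eq_comm, or_comm])]
  refine Finset.sum_congr rfl fun e _ => ?_
  rw [Finset.sum_pair (hloop e)]
  ring

lemma dirichlet_expand' (ends : E → V × V)
    (hloop : ∀ e, (ends e).1 ≠ (ends e).2) (W : E → ℝ) (σ : V → Bool) (Φ : V → ℝ) :
    dirichletForm ends W (fun _ => 0) (fun x => spin (σ x) * Φ x)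
      = ∑ x, Wtot ends W x * Φ x ^ 2
        - 2 * ∑ e, (if σ (ends e).1 = σ (ends e).2 then (1:ℝ) else -1) * Jw ends W Φ e := by
  rw [dirichletForm, sum_Wtot' ends hloop W Φ]
  simp only [zero_mul, Finset.sum_const_zero, zero_add, Finset.mul_sum, ← Finset.sum_sub_distrib]
  refine Finset.sum_congr rfl fun e _ => ?_
  rw [Jw]
  cases hc1 : σ (ends e).1 <;> cases hc2 : σ (ends e).2 <;> simp [spin, hc1, hc2] <;> ring

lemma prodid' (p : E → Prop) [DecidablePred p] (J : E → ℝ) (n : E → ℕ)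
    (h0 : ∀ e, ¬ p e → n e = 0) :
    Real.exp (∑ e, (if p e then (1:ℝ) else -1) * J e) *
      ∏ e ∈ Finset.univ.filter p,
        (Real.exp (-(2 * J e)) * (2 * J e) ^ n e / ((n e).factorial : ℝ))
    = Real.exp (-∑ e, J e) * ∏ e, (2 * J e) ^ n e / ((n e).factorial : ℝ) := by
  rw [Real.exp_sum, Finset.prod_filter, ← Finset.prod_mul_distrib,
    show -∑ e, J e = ∑ e, -(J e) by simp, Real.exp_sum, ← Finset.prod_mul_distrib]
  refine Finset.prod_congr rfl fun e _ => ?_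
  by_cases hp : p e
  · simp only [hp, if_true, one_mul]
    rw [mul_div_assoc, ← mul_assoc, ← Real.exp_add, show J e + -(2 * J e) = -J e by ring]
  · simp [hp, h0 e hp, Real.exp_neg]

lemma integrand_eq' (ends : E → V × V)
    (hloop : ∀ e, (ends e).1 ≠ (ends e).2) (W : E → ℝ) (σ : V → Bool) (n : E → ℕ)
    (hcpt : ∀ e, σ (ends e).1 ≠ σ (ends e).2 → n e = 0) (Φ : V → ℝ) :
    Real.exp (-(1 / 2) * dirichletForm ends W (fun _ => 0)
        (fun x => spin (σ x) * Φ x)) *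
      ∏ e ∈ Finset.univ.filter (fun e => σ (ends e).1 = σ (ends e).2),
        Real.exp (-(2 * Jw ends W Φ e)) * (2 * Jw ends W Φ e) ^ n e / ((n e).factorial : ℝ)
    = Real.exp (-(1 / 2) * ∑ x, Wtot ends W x * Φ x ^ 2 - ∑ e, Jw ends W Φ e) *
        ∏ e, (2 * Jw ends W Φ e) ^ n e / ((n e).factorial : ℝ) := by
  classical
  have h0 : ∀ e, ¬(σ (ends e).1 = σ (ends e).2) → n e = 0 := fun e he => hcpt e he
  rw [dirichlet_expand' ends hloop W σ Φ,
    show -(1 / 2 : ℝ) * (∑ x, Wtot ends W x * Φ x ^ 2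
        - 2 * ∑ e, (if σ (ends e).1 = σ (ends e).2 then (1:ℝ) else -1) * Jw ends W Φ e)
      = -(1 / 2) * ∑ x, Wtot ends W x * Φ x ^ 2
        + ∑ e, (if σ (ends e).1 = σ (ends e).2 then (1:ℝ) else -1) * Jw ends W Φ e by ring,
    Real.exp_add, mul_assoc, prodid' (fun e => σ (ends e).1 = σ (ends e).2) (Jw ends W Φ) n h0,
    show -(1 / 2 : ℝ) * ∑ x, Wtot ends W x * Φ x ^ 2 - ∑ e, Jw ends W Φ e
      = -(1 / 2) * ∑ x, Wtot ends W x * Φ x ^ 2 + -(∑ e, Jw ends W Φ e) by ring,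
    Real.exp_add, mul_assoc]

/-- summing the signed densities over spins `σ` pinned at `x₀`
(and over currents compatible with `σ`) yields the unsigned density with the
cluster factor `2^{#C(n)-1}`. -/
theorem stmt6 [Nonempty V] (ends : E → V × V)
    (hloop : ∀ e, (ends e).1 ≠ (ends e).2)
    (hconn : (og ends (fun _ => True)).Connected)
    (W : E → ℝ) (hW : ∀ e, 0 < W e) (x₀ : V)
    (h : (V → ℝ) → (E → ℕ) → ℝ≥0∞)
    (hh : ∀ n, Measurable (fun Φ => h Φ n)) :
    ∑ σ ∈ Finset.univ.filter (fun σ : V → Bool => σ x₀ = true),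
      ∑' n : E → ℕ,
        (if ∀ e, σ (ends e).1 ≠ σ (ends e).2 → n e = 0 then
          ∫⁻ φ in {φ : {x : V // x ≠ x₀} → ℝ | ∀ i, 0 < φ i},
            h (extV x₀ 0 φ) n *
            ENNReal.ofReal
              (Real.exp (-(1 / 2) * dirichletForm ends W (fun _ => 0)
                  (fun x => spin (σ x) * extV x₀ 0 φ x)) *
               ∏ e ∈ Finset.univ.filter (fun e => σ (ends e).1 = σ (ends e).2),
                 Real.exp (-(2 * Jw ends W (extV x₀ 0 φ) e)) *
                   (2 * Jw ends W (extV x₀ 0 φ) e) ^ n e / ((n e).factorial : ℝ))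
        else 0)
    =
    ∑' n : E → ℕ,
      ∫⁻ φ in {φ : {x : V // x ≠ x₀} → ℝ | ∀ i, 0 < φ i},
        h (extV x₀ 0 φ) n *
        ENNReal.ofReal
          (Real.exp (-(1 / 2) * ∑ x, Wtot ends W x * extV x₀ 0 φ x ^ 2
              - ∑ e, Jw ends W (extV x₀ 0 φ) e) *
           (∏ e, (2 * Jw ends W (extV x₀ 0 φ) e) ^ n e / ((n e).factorial : ℝ)) *
           2 ^ (numC ends (fun e => 0 < n e) - 1)) := by
  classical
  rw [← Summable.tsum_finsetSum (fun σ _ => ENNReal.summable)]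
  refine tsum_congr fun n => ?_
  -- the common (σ-independent) integral
  set Ic : ℝ≥0∞ := ∫⁻ φ in {φ : {x : V // x ≠ x₀} → ℝ | ∀ i, 0 < φ i},
      h (extV x₀ 0 φ) n *
      ENNReal.ofReal
        (Real.exp (-(1 / 2) * ∑ x, Wtot ends W x * extV x₀ 0 φ x ^ 2
            - ∑ e, Jw ends W (extV x₀ 0 φ) e) *
         ∏ e, (2 * Jw ends W (extV x₀ 0 φ) e) ^ n e / ((n e).factorial : ℝ)) with hIc
  set k : ℕ := numC ends (fun e => 0 < n e) - 1 with hk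
  -- LHS: each compatible σ yields `Ic`
  have hL : ∑ σ ∈ Finset.univ.filter (fun σ : V → Bool => σ x₀ = true),
      (if ∀ e, σ (ends e).1 ≠ σ (ends e).2 → n e = 0 then
        ∫⁻ φ in {φ : {x : V // x ≠ x₀} → ℝ | ∀ i, 0 < φ i},
          h (extV x₀ 0 φ) n *
          ENNReal.ofReal
            (Real.exp (-(1 / 2) * dirichletForm ends W (fun _ => 0)
                (fun x => spin (σ x) * extV x₀ 0 φ x)) *
             ∏ e ∈ Finset.univ.filter (fun e => σ (ends e).1 = σ (ends e).2),
               Real.exp (-(2 * Jw ends W (extV x₀ 0 φ) e)) *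
                 (2 * Jw ends W (extV x₀ 0 φ) e) ^ n e / ((n e).factorial : ℝ))
      else 0)
      = ∑ σ ∈ Finset.univ.filter (fun σ : V → Bool => σ x₀ = true),
        (if ∀ e, σ (ends e).1 ≠ σ (ends e).2 → n e = 0 then Ic else 0) := by
    refine Finset.sum_congr rfl fun σ _ => ?_
    split_ifs with hcpt
    · refine lintegral_congr fun φ => ?_
      congr 2
      exact integrand_eq' ends hloop W σ n hcpt (extV x₀ 0 φ)
    · rfl
  rw [hL]
  -- count the compatible σ's
  have hcount : ∑ σ ∈ Finset.univ.filter (fun σ : V → Bool => σ x₀ = true),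
      (if ∀ e, σ (ends e).1 ≠ σ (ends e).2 → n e = 0 then Ic else 0)
      = (2 ^ k : ℕ) * Ic := by
    rw [← Finset.sum_filter, Finset.filter_filter]
    rw [Finset.sum_const, counting' ends x₀ n, ← hk, nsmul_eq_mul]
  rw [hcount]
  -- RHS: pull the constant `2^k` out
  have hR : ∀ φ : {x : V // x ≠ x₀} → ℝ,
      h (extV x₀ 0 φ) n *
      ENNReal.ofReal
        (Real.exp (-(1 / 2) * ∑ x, Wtot ends W x * extV x₀ 0 φ x ^ 2
            - ∑ e, Jw ends W (extV x₀ 0 φ) e) *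
         (∏ e, (2 * Jw ends W (extV x₀ 0 φ) e) ^ n e / ((n e).factorial : ℝ)) *
         2 ^ k)
      = (2 ^ k : ℕ) *
        (h (extV x₀ 0 φ) n *
         ENNReal.ofReal
           (Real.exp (-(1 / 2) * ∑ x, Wtot ends W x * extV x₀ 0 φ x ^ 2
               - ∑ e, Jw ends W (extV x₀ 0 φ) e) *
            ∏ e, (2 * Jw ends W (extV x₀ 0 φ) e) ^ n e / ((n e).factorial : ℝ))) := by
    intro φ
    rw [ENNReal.ofReal_mul' (by positivity : (0:ℝ) ≤ 2 ^ k)]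
    rw [show ENNReal.ofReal ((2:ℝ) ^ k) = ((2 ^ k : ℕ) : ℝ≥0∞) by
      rw [ENNReal.ofReal_pow (by norm_num)]
      norm_num]
    ring
  rw [lintegral_congr hR, lintegral_const_mul' _ _ (by
    simp [ENNReal.pow_ne_top, ENNReal.natCast_ne_top] : ((2 ^ k : ℕ) : ℝ≥0∞) ≠ ⊤)]
end
end

section
/- Let G=(V,E) be a finite graph with conductances W: E→ℝ_{>0} and killing measure κ: V→ℝ_{≥0}, let x₀∈V, and let h: V→ℝ_{>0} satisfy h(x₀)=1 and the harmonicity equation −κ_x h(x)+Σ_{y: y∼x}W_{xy}(h(y)−h(x))=0 for every x∈V∖{x₀}. Define the h-transformed conductances W^h_{xy}=W_{xy}h(x)h(y) and the Dirichlet form E^h(f,f)=Σ_{e∈E}W^h_e(f(e₊)−f(e₋))² (with zero killing measure). Then for every f: V→ℝ, E(hf,hf) = (κ_{x₀} − Σ_{y: y∼x₀}W_{x₀,y}(h(y)−1))·f(x₀)² + E^h(f,f), where hf denotes the function x↦h(x)f(x) and E(g,g)=Σ_{x∈V}κ_x g(x)²+Σ_{e∈E}W_e(g(e₊)−g(e₋))².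 -/
open scoped Classical
noncomputable section

variable {V E : Type} [Fintype V] [Fintype E]

/-- The endpoint of the edge `e` other than `x`. -/
def oth (ends : E → V × V) (e : E) (x : V) : V :=
  if (ends e).1 = x then (ends e).2 else (ends e).1

/-- the Doob `h`-transform identity for the Dirichlet form:
`E(hf, hf) = (κ_{x₀} - ∑_{y ~ x₀} W_{x₀ y}(h(y) - 1)) f(x₀)² + E^h(f, f)`,
where `W^h_{xy} = W_{xy} h(x) h(y)` and `E^h` has zero killing measure. -/
theorem stmt12 [Nonempty V] (ends : E → V × V)
    (hloop : ∀ e, (ends e).1 ≠ (ends e).2)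
    (W : E → ℝ) (hW : ∀ e, 0 < W e) (κ : V → ℝ) (hκ : ∀ x, 0 ≤ κ x)
    (x₀ : V) (h : V → ℝ) (hpos : ∀ x, 0 < h x) (hx₀ : h x₀ = 1)
    (hharm : ∀ x, x ≠ x₀ →
      -(κ x) * h x + ∑ e ∈ inc ends x, W e * (h (oth ends e x) - h x) = 0)
    (f : V → ℝ) :
    dirichletForm ends W κ (fun x => h x * f x) =
      (κ x₀ - ∑ e ∈ inc ends x₀, W e * (h (oth ends e x₀) - 1)) * f x₀ ^ 2 +
      dirichletForm ends (fun e => W e * h (ends e).1 * h (ends e).2) (fun _ => 0) f := by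

  classical
  have hoth1 : ∀ e, oth ends e (ends e).1 = (ends e).2 := fun e => if_pos rfl
  have hoth2 : ∀ e, oth ends e (ends e).2 = (ends e).1 := fun e => if_neg (hloop e)
  set F : E → V → ℝ := fun e x => W e * (h x - h (oth ends e x)) * (h x * f x ^ 2) with hF
  have swap : ∑ x, ∑ e ∈ inc ends x, F e x
      = ∑ e, (F e (ends e).1 + F e (ends e).2) := by
    have h1 : ∀ x, ∑ e ∈ inc ends x, F e x
        = ∑ e, if (ends e).1 = x ∨ (ends e).2 = x then F e x else 0 := by
      intro x; rw [inc, Finset.sum_filter]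
    rw [Finset.sum_congr rfl fun x _ => h1 x, Finset.sum_comm]
    refine Finset.sum_congr rfl fun e _ => ?_
    rw [← Finset.sum_filter]
    have hset : (Finset.univ.filter fun x => (ends e).1 = x ∨ (ends e).2 = x)
        = {(ends e).1, (ends e).2} := by
      ext x; simp [eq_comm]
    rw [hset, Finset.sum_pair (hloop e)]
  have key : ∀ e : E, W e * (h (ends e).1 * f (ends e).1 - h (ends e).2 * f (ends e).2) ^ 2
      = W e * h (ends e).1 * h (ends e).2 * (f (ends e).1 - f (ends e).2) ^ 2
        + (F e (ends e).1 + F e (ends e).2) := by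
    intro e; simp only [hF, hoth1, hoth2]; ring
  have main : ∑ x, (κ x * (h x * f x) ^ 2 + ∑ e ∈ inc ends x, F e x)
      = (κ x₀ - ∑ e ∈ inc ends x₀, W e * (h (oth ends e x₀) - 1)) * f x₀ ^ 2 := by
    rw [Finset.sum_eq_single x₀]
    · have hFx₀ : ∑ e ∈ inc ends x₀, F e x₀
          = (∑ e ∈ inc ends x₀, -(W e * (h (oth ends e x₀) - 1))) * f x₀ ^ 2 := by
        rw [Finset.sum_mul]
        refine Finset.sum_congr rfl fun e _ => ?_
        simp only [hF, hx₀]; ring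
      rw [hFx₀, hx₀, Finset.sum_neg_distrib]
      ring
    · intro x _ hne
      have hh := hharm x hne
      have hsum : ∑ e ∈ inc ends x, F e x
          = (∑ e ∈ inc ends x, W e * (h (oth ends e x) - h x)) * (-(h x * f x ^ 2)) := by
        rw [Finset.sum_mul]
        refine Finset.sum_congr rfl fun e _ => ?_
        simp only [hF]; ring
      rw [hsum]
      linear_combination (-(h x * f x ^ 2)) * hh
    · intro hx; exact absurd (Finset.mem_univ x₀) hx
  unfold dirichletForm
  simp only [zero_mul, Finset.sum_const_zero, zero_add]
  rw [Finset.sum_congr rfl fun e (_ : e ∈ Finset.univ) => key e, Finset.sum_add_distrib, ← swap]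
  rw [← main, Finset.sum_add_distrib]
  ring
end
end
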